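/- arXiv:2402.13099 — 9 statements merged into one kernel-verified Lean document; each statement's English description precedes it below -/
import Mathlib

section
/- For any finite category C, the idempotent completion (Karoubi envelope) of C is equivalent to the ind-completion of C; that is, there is an equivalence of categories Karoubi C ≌ Ind C. -/
/-! If `F : C ⥤ D` is fully faithful, `D` is idempotent complete and every object of `D` is a
retract of some `F.obj c`, then the extension `Karoubi C ⥤ D` of `F` is an equivalence; we apply
this to `Ind.yoneda`.

For finite `C`, an ind-object `A` takes finite values: every finite subset of the filtered colimit
`A(c)` already comes from a single `c ⟶ d`. So the filtered category of elements of `A` is finite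
and has a cocone over its identity functor, whose apex splits the tautological colimit
presentation of `A`: `A` is a retract of a representable. Conversely, the category of elements of
such a retract has an object through which every object maps, coequalizing all parallel pairs, so
it is an ind-object. In particular ind-objects are closed under retracts and `Ind C` is idempotent
complete. -/

open CategoryTheory CategoryTheory.Idempotents CategoryTheory.Limits Opposite

universe u v

def CategoryTheory.Functor.FullyFaithful.preimageRetract {C D : Type*} [Category* C] [Category* D]
    {F : C ⥤ D} (hF : F.FullyFaithful) {X Y : C} (h : Retract (F.obj X) (F.obj Y)) :
    Retract X Y where
  i := hF.preimage h.i
  r := hF.preimage h.r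
  retract := hF.map_injective (by simp)

instance : IsIdempotentComplete (Type u) :=
  (isIdempotentComplete_iff_hasEqualizer_of_id_and_idempotent _).2 fun _ _ _ => inferInstance

instance CategoryTheory.ObjectProperty.isIdempotentComplete_fullSubcategory {D : Type*}
    [Category* D] [IsIdempotentComplete D] (P : ObjectProperty D) [P.IsStableUnderRetracts] :
    IsIdempotentComplete P.FullSubcategory where
  idempotents_split X p hp := by
    obtain ⟨Y, i, e, hie, hei⟩ :=
      IsIdempotentComplete.idempotents_split X.obj p.hom congr(($hp).hom)
    exact ⟨⟨Y, P.prop_of_retract ⟨i, e, hie⟩ X.property⟩, ObjectProperty.homMk i,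
      ObjectProperty.homMk e, P.hom_ext hie, P.hom_ext hei⟩

namespace CategoryTheory.Idempotents

variable {C D : Type*} [Category* C] [Category* D] {F : C ⥤ D}

def _root_.CategoryTheory.Functor.FullyFaithful.functorExtension₂ (hF : F.FullyFaithful) :
    ((functorExtension₂ C D).obj F).FullyFaithful where
  preimage g := ⟨hF.preimage g.f, hF.map_injective (by
    have e : F.map (hF.preimage g.f) = g.f := hF.map_preimage g.f
    rw [F.map_comp, F.map_comp, e]
    exact g.comm)⟩
  map_preimage g := by ext; exact hF.map_preimage g.f
  preimage_map f := by ext; simp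

def isoFunctorExtension₂ObjOfRetract (hF : F.FullyFaithful) {d : D} {c : C}
    (h : Retract d (F.obj c)) :
    (toKaroubi D).obj d ≅ ((functorExtension₂ C D).obj F).obj
      ⟨c, hF.preimage (h.r ≫ h.i), hF.map_injective (by simp)⟩ where
  hom := ⟨h.i, show 𝟙 d ≫ h.i ≫ F.map (hF.preimage (h.r ≫ h.i)) = h.i by simp⟩
  inv := ⟨h.r, show F.map (hF.preimage (h.r ≫ h.i)) ≫ h.r ≫ 𝟙 d = h.r by simp⟩
  hom_inv_id := by ext; exact h.retract
  inv_hom_id := by ext; exact (hF.map_preimage _).symm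

theorem isEquivalence_functorExtension_obj [IsIdempotentComplete D] (hF : F.FullyFaithful)
    (hF' : ∀ d : D, ∃ c, Nonempty (Retract d (F.obj c))) :
    ((functorExtension C D).obj F).IsEquivalence where
  faithful := (hF.functorExtension₂.comp (toKaroubiEquivalence D).fullyFaithfulInverse).faithful
  full := (hF.functorExtension₂.comp (toKaroubiEquivalence D).fullyFaithfulInverse).full
  essSurj := ⟨fun d => by
    obtain ⟨c, ⟨h⟩⟩ := hF' d
    exact ⟨_, ⟨(toKaroubiEquivalence D).inverse.mapIso (isoFunctorExtension₂ObjOfRetract hF h).symm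
      ≪≫ (toKaroubiEquivalence D).unitIso.symm.app d⟩⟩⟩

end CategoryTheory.Idempotents

namespace CategoryTheory.Limits.IsIndObject

section

variable {C : Type u} [Category.{v} C] {A : Cᵒᵖ ⥤ Type v}

theorem of_retract_yoneda {c : C} (h : Retract A (yoneda.obj c)) : IsIndObject A := by
  let t : CostructuredArrow yoneda A := CostructuredArrow.mk h.r
  let τ (x : CostructuredArrow yoneda A) : x ⟶ t :=
    CostructuredArrow.homMk (yoneda.preimage (x.hom ≫ h.i)) (by simp [t])
  have hτ {x y : CostructuredArrow yoneda A} (f : x ⟶ y) : f ≫ τ y = τ x := by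
    ext
    apply yoneda.map_injective
    simp only [τ, CostructuredArrow.comp_left, CostructuredArrow.homMk_left, Functor.map_comp,
      Functor.map_preimage, CostructuredArrow.w_assoc]
  have : IsFilteredOrEmpty (CostructuredArrow yoneda A) :=
    ⟨fun x y => ⟨t, τ x, τ y, trivial⟩, fun {_ y} f g => ⟨t, τ y, by rw [hτ f, hτ g]⟩⟩
  have : IsFiltered (CostructuredArrow yoneda A) := { nonempty := ⟨t⟩ }
  have : FinallySmall.{v} (CostructuredArrow yoneda A) :=
    finallySmall_of_small_weakly_terminal_set {t} fun x => ⟨t, rfl, ⟨τ x⟩⟩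
  exact isIndObject_of_isFiltered_of_finallySmall A

theorem exists_finset_subset_range_app (hA : IsIndObject A) (c : C) (s : Finset (A.obj (op c))) :
    ∃ (d : C) (x : yoneda.obj d ⟶ A), ↑s ⊆ Set.range fun g : c ⟶ d => x.app (op c) g := by
  classical
  have := hA.isFiltered
  let u (a : A.obj (op c)) : CostructuredArrow yoneda A := CostructuredArrow.mk (yonedaEquiv.symm a)
  obtain ⟨t, ht⟩ := IsFiltered.sup_objs_exists (s.image u)
  refine ⟨t.left, t.hom, fun a ha => ?_⟩
  obtain ⟨f⟩ : Nonempty (u a ⟶ t) := ht (Finset.mem_image_of_mem u ha)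
  refine ⟨f.left, ?_⟩
  calc t.hom.app (op c) f.left = yonedaEquiv (yoneda.map f.left ≫ t.hom) := by
        rw [yonedaEquiv_comp, yonedaEquiv_yoneda_map]; rfl
    _ = a := by rw [CostructuredArrow.w f]; simp [u]

end

variable {C : Type u} [SmallCategory C] [FinCategory C] {A : Cᵒᵖ ⥤ Type u}

theorem finite_obj (hA : IsIndObject A) (c : Cᵒᵖ) : Finite (A.obj c) := by
  classical
  by_contra hinf
  rw [not_finite_iff_infinite] at hinf
  let K := Fintype.card (Σ d : C, c.unop ⟶ d)
  obtain ⟨s, hs⟩ := Infinite.exists_subset_card_eq (A.obj c) (K + 1)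
  obtain ⟨d, x, hx⟩ := hA.exists_finset_subset_range_app c.unop s
  have hsub : s ⊆ Finset.univ.image (fun g : c.unop ⟶ d => x.app c g) := fun a ha => by
    obtain ⟨g, rfl⟩ := hx ha
    exact Finset.mem_image_of_mem _ (Finset.mem_univ g)
  have hK : Fintype.card (c.unop ⟶ d) ≤ K :=
    Fintype.card_le_of_injective (Sigma.mk d) sigma_mk_injective
  have := (Finset.card_le_card hsub).trans Finset.card_image_le
  simp only [Finset.card_univ] at this
  omega

theorem finite_costructuredArrow (hA : IsIndObject A) : Finite (CostructuredArrow yoneda A) :=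
  have := hA.finite_obj
  Finite.of_surjective
    (fun x : Σ d : C, A.obj (op d) => CostructuredArrow.mk (yonedaEquiv.symm x.2))
    fun x => ⟨⟨x.left, yonedaEquiv x.hom⟩, by simp; rfl⟩

theorem exists_retract_yoneda (hA : IsIndObject A) :
    ∃ c : C, Nonempty (Retract A (yoneda.obj c)) := by
  have := hA.isFiltered
  let : FinCategory (CostructuredArrow yoneda A) :=
    { fintypeObj := @Fintype.ofFinite _ hA.finite_costructuredArrow
      fintypeHom x y := @Fintype.ofFinite _ <|
        Finite.of_injective (fun f : x ⟶ y => f.left) fun f g => CostructuredArrow.hom_ext f g }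
  let T := IsFiltered.cocone (𝟭 (CostructuredArrow yoneda A))
  let hA' := Presheaf.isColimitTautologicalCocone A
  let s : A ⟶ yoneda.obj T.pt.left :=
    hA'.desc ((CostructuredArrow.proj yoneda A ⋙ yoneda).mapCocone T)
  refine ⟨T.pt.left, ⟨⟨s, T.pt.hom, hA'.hom_ext fun x => ?_⟩⟩⟩
  change x.hom ≫ s ≫ T.pt.hom = x.hom ≫ 𝟙 A
  have hs : x.hom ≫ s = yoneda.map (T.ι.app x).left := hA'.fac _ x
  rw [reassoc_of% hs]
  simp

instance : ObjectProperty.IsStableUnderRetracts (IsIndObject (C := C)) where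
  of_retract h hA := by
    obtain ⟨c, ⟨h'⟩⟩ := hA.exists_retract_yoneda
    exact of_retract_yoneda (h.trans h')

end CategoryTheory.Limits.IsIndObject

namespace CategoryTheory.Ind

variable {C : Type u} [SmallCategory C] [FinCategory C]

instance : IsIdempotentComplete (Ind C) :=
  Equivalence.isIdempotentComplete (Ind.equivalence C).symm inferInstance

theorem exists_retract_yoneda (X : Ind C) : ∃ c : C, Nonempty (Retract X (Ind.yoneda.obj c)) := by
  obtain ⟨c, ⟨h⟩⟩ := (Ind.isIndObject_inclusion_obj X).exists_retract_yoneda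
  exact ⟨c, ⟨Ind.inclusion.fullyFaithful.preimageRetract
    (h.trans (Retract.ofIso (Ind.yonedaCompInclusion.app c).symm))⟩⟩

end CategoryTheory.Ind

theorem stmt_0 (C : Type u) [SmallCategory C] [FinCategory C] :
    Nonempty (Karoubi C ≌ Ind C) := by
  have := isEquivalence_functorExtension_obj (Ind.yoneda.fullyFaithful (C := C))
    Ind.exists_retract_yoneda
  exact ⟨((functorExtension C (Ind C)).obj Ind.yoneda).asEquivalence⟩
end

section
/- For a finite category C, a presheaf P : Cᵒᵖ ⥤ Type is an ind-object (i.e. a filtered colimit of representables, Mathlib's `IsIndObject`) if and only if there exists an object c : C such that P is a retract of the representable presheaf yoneda.obj c. -/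
/-!
An ind-object `P` on a finite category takes finite values: `P(d)` is a filtered colimit of the
sets `Hom(d, cᵢ)`, whose sizes are bounded independently of `i`. Hence `P` is a finite colimit of
representables, so it is finitely presentable, and `𝟙 P` factors through a stage `yoneda cᵢ` of
its ind-presentation: `P` is a retract of `yoneda cᵢ`.

Conversely, if `i ≫ r = 𝟙 P` with `i : P ⟶ yoneda c`, then every `e : yoneda d ⟶ P` maps to
`(c, r)` in the category of elements via `e ≫ i`, compatibly with all morphisms; so this category
is filtered and has a weakly terminal object, which makes `P` an ind-object.
-/

open CategoryTheory CategoryTheory.Limits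

universe u

/-- A retract datum: `a` is a retract of `b` via a section `i` and a retraction `r`.
(This matches Mathlib's `CategoryTheory.Retract`.) -/
structure Retract {C : Type*} [Category C] (a b : C) where
  /-- the section -/
  i : a ⟶ b
  /-- the retraction -/
  r : b ⟶ a
  retract : i ≫ r = 𝟙 a

universe w v

namespace CategoryTheory

lemma IsFiltered.of_cocone_id {J : Type*} [Category J] (t : J) (τ : ∀ j, j ⟶ t)
    (hτ : ∀ ⦃i j : J⦄ (f : i ⟶ j), f ≫ τ j = τ i) : IsFiltered J :=
  { toIsFilteredOrEmpty :=
      ⟨fun i j => ⟨t, τ i, τ j, trivial⟩, fun _ j f g => ⟨t, τ j, (hτ f).trans (hτ g).symm⟩⟩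
    nonempty := ⟨t⟩ }

lemma Limits.Types.finite_of_isColimit_of_card_le {J : Type*} [Category J] [IsFiltered J]
    {F : J ⥤ Type*} {c : Cocone F} (hc : IsColimit c) [∀ j, Finite (F.obj j)] (N : ℕ)
    (hN : ∀ j, Nat.card (F.obj j) ≤ N) : Finite c.pt := by
  classical
  by_contra hinf
  rw [not_finite_iff_infinite] at hinf
  obtain ⟨S, hS⟩ := Infinite.exists_subset_card_eq c.pt (N + 1)
  choose j y hy using fun x : S => jointly_surjective_of_isColimit hc x.1
  let k := IsFiltered.sup (Finset.univ.image j) ∅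
  let z : S → F.obj k := fun x =>
    F.map (IsFiltered.toSup _ ∅ (Finset.mem_image_of_mem j (Finset.mem_univ x))) (y x)
  have hz : ∀ x : S, c.ι.app k (z x) = x.1 := fun x => by
    rw [← hy x]
    exact ConcreteCategory.congr_hom (c.w _) (y x)
  have hinj : Function.Injective z := fun x x' h => Subtype.ext (by rw [← hz x, ← hz x', h])
  have hS_le := Nat.card_le_card_of_injective z hinj
  simp only [Nat.card_eq_fintype_card, Fintype.card_coe, hS] at hS_le
  have := hN k
  omega

noncomputable instance Functor.Elements.finCategory {J : Type w} [SmallCategory J]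
    [FinCategory J] (F : J ⥤ Type w) [∀ j, Finite (F.obj j)] : FinCategory F.Elements where
  fintypeObj := Fintype.ofFinite (Σ j, F.obj j)
  fintypeHom X Y := Fintype.ofFinite { f : X.1 ⟶ Y.1 // F.map f X.2 = Y.2 }

attribute [local instance] Cardinal.fact_isRegular_aleph0

lemma isFinitelyPresentable_of_finite {C : Type u} [SmallCategory C] [FinCategory C]
    (P : Cᵒᵖ ⥤ Type u) [∀ d, Finite (P.obj d)] : IsFinitelyPresentable.{u} P :=
  have (e : P.Elementsᵒᵖ) :
      IsFinitelyPresentable.{u} ((Presheaf.functorToRepresentables.{u} P).obj e) :=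
    inferInstanceAs (IsFinitelyPresentable.{u} (uliftYoneda.{u}.obj _))
  isCardinalPresentable_of_isColimit' _ (Presheaf.colimitOfRepresentable.{u} P) _
    (by rw [hasCardinalLT_arrow_op_iff, hasCardinalLT_aleph0_iff]; infer_instance)

lemma Limits.IsIndObject.finite_obj_s1 {C : Type u} [SmallCategory C] [FinCategory C]
    {P : Cᵒᵖ ⥤ Type u} (h : IsIndObject P) (d : Cᵒᵖ) : Finite (P.obj d) := by
  let p := h.presentation
  have (i : p.I) : Finite (((p.F ⋙ yoneda) ⋙ (evaluation Cᵒᵖ (Type u)).obj d).obj i) :=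
    inferInstanceAs (Finite (d.unop ⟶ p.F.obj i))
  exact Limits.Types.finite_of_isColimit_of_card_le
    (isColimitOfPreserves ((evaluation Cᵒᵖ (Type u)).obj d) p.coconeIsColimit)
    (Nat.card (Σ c : C, d.unop ⟶ c))
    (fun i => Nat.card_le_card_of_injective (Sigma.mk (p.F.obj i)) sigma_mk_injective)

variable {C : Type u} [Category.{v} C] {P : Cᵒᵖ ⥤ Type v}

lemma Limits.IsIndObject.exists_retract_of_isFinitelyPresentable (h : IsIndObject P)
    [IsFinitelyPresentable.{v} P] : ∃ c : C, Nonempty (_root_.Retract P (yoneda.obj c)) := by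
  let p := h.presentation
  obtain ⟨i, s, hs⟩ := IsFinitelyPresentable.exists_hom_of_isColimit p.coconeIsColimit (𝟙 P)
  exact ⟨p.F.obj i, ⟨⟨s, p.cocone.ι.app i, hs⟩⟩⟩

lemma Limits.isIndObject_of_retract {c : C} (h : _root_.Retract P (yoneda.obj c)) :
    IsIndObject P := by
  obtain ⟨i, r, hir⟩ := h
  let t : CostructuredArrow yoneda P := CostructuredArrow.mk r
  let τ (e : CostructuredArrow yoneda P) : e ⟶ t :=
    CostructuredArrow.homMk (yoneda.preimage (e.hom ≫ i)) (by simp [t, hir])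
  have : IsFiltered (CostructuredArrow yoneda P) := IsFiltered.of_cocone_id t τ fun e e' m => by
    ext
    apply yoneda.map_injective
    simp only [τ, CostructuredArrow.comp_left, CostructuredArrow.homMk_left, Functor.map_comp,
      Functor.map_preimage]
    rw [← Category.assoc, CostructuredArrow.w m]
  have : FinallySmall.{v} (CostructuredArrow yoneda P) :=
    finallySmall_of_small_weakly_terminal_set {t} fun e => ⟨t, rfl, ⟨τ e⟩⟩
  exact isIndObject_of_isFiltered_of_finallySmall P

end CategoryTheory

theorem stmt_1 (C : Type u) [SmallCategory C] [FinCategory C] (P : Cᵒᵖ ⥤ Type u) :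
    IsIndObject P ↔ ∃ c : C, Nonempty (_root_.Retract P (yoneda.obj c)) := by
  refine ⟨fun h => ?_, fun ⟨_, ⟨r⟩⟩ => isIndObject_of_retract r⟩
  have := h.finite_obj_s1
  have := isFinitelyPresentable_of_finite P
  exact h.exists_retract_of_isFinitelyPresentable
end

section
/- Let J be a finite category. The lattice of subobjects of the terminal object of the functor category J ⥤ FintypeCat is order-isomorphic to the lattice (ordered by inclusion) of upward closed sets of objects of J. -/
open CategoryTheory CategoryTheory.Limits

universe u

/-- A set `S` of objects of a category `C` is upward closed if for every morphism
`g : x ⟶ y`, `x ∈ S` implies `y ∈ S`. -/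
def UpwardClosed {C : Type*} [Category C] (S : Set C) : Prop :=
  ∀ {x y : C}, (x ⟶ y) → x ∈ S → y ∈ S

/-! A subobject `X` of the terminal functor is objectwise a subsingleton, since a monomorphism of
`FintypeCat`-valued functors is objectwise injective. Between objectwise subsingleton functors a
morphism `X ⟶ Y` exists exactly when every `j` with `X j` nonempty has `Y j` nonempty, so the
support `{j | Nonempty (X j)}`, upward closed by functoriality, is an order embedding of
subobjects. It is onto: an upward closed set `S` is the support of the functor `j ↦ (j ∈ S)`. -/

namespace FunctorToFintypeCat

variable {C : Type*} [Category C]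

lemma subsingleton_obj_terminal (j : C) : Subsingleton ((⊤_ (C ⥤ FintypeCat.{u})).obj j) :=
  @Unique.instSubsingleton _ <| Concrete.uniqueOfTerminalOfPreserves _ <|
    IsTerminal.isTerminalObj ((evaluation C FintypeCat).obj j) _ terminalIsTerminal

lemma subsingleton_obj_of_mono_terminal {F : C ⥤ FintypeCat.{u}}
    (f : F ⟶ ⊤_ (C ⥤ FintypeCat.{u})) [Mono f] (j : C) : Subsingleton (F.obj j) :=
  have : Subsingleton ((⊤_ (C ⥤ FintypeCat.{u})).obj j) := subsingleton_obj_terminal j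
  (ConcreteCategory.injective_of_mono_of_preservesPullback (f.app j)).subsingleton

lemma mono_of_subsingleton_obj {F G : C ⥤ FintypeCat.{u}} (f : F ⟶ G)
    (hF : ∀ j, Subsingleton (F.obj j)) : Mono f :=
  ⟨fun _ _ _ => by ext; exact Subsingleton.elim _ _⟩

noncomputable def homOfNonempty {F G : C ⥤ FintypeCat.{u}} (hG : ∀ j, Subsingleton (G.obj j))
    (h : ∀ j, Nonempty (F.obj j) → Nonempty (G.obj j)) : F ⟶ G where
  app j := FintypeCat.homMk fun x => (h j ⟨x⟩).some
  naturality _ _ _ := by ext; exact Subsingleton.elim _ _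

end FunctorToFintypeCat

namespace UpwardClosed

variable {C : Type*} [Category C] {S : Set C}

def functor (hS : UpwardClosed S) : C ⥤ FintypeCat.{u} where
  obj j := FintypeCat.of (ULift (PLift (j ∈ S)))
  map g := FintypeCat.homMk fun x => ⟨⟨hS g x.down.down⟩⟩
  map_id _ := FintypeCat.hom_ext _ _ fun _ => Subsingleton.elim (α := ULift (PLift _)) _ _
  map_comp _ _ := FintypeCat.hom_ext _ _ fun _ => Subsingleton.elim (α := ULift (PLift _)) _ _

instance (hS : UpwardClosed S) (j : C) : Subsingleton (hS.functor.{u}.obj j) :=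
  inferInstanceAs (Subsingleton (ULift (PLift (j ∈ S))))

lemma nonempty_functor_obj_iff (hS : UpwardClosed S) (j : C) :
    Nonempty (hS.functor.{u}.obj j) ↔ j ∈ S :=
  ⟨fun ⟨x⟩ => x.down.down, fun h => ⟨⟨⟨h⟩⟩⟩⟩

instance (hS : UpwardClosed S) : Mono (terminal.from hS.functor.{u}) :=
  FunctorToFintypeCat.mono_of_subsingleton_obj _ inferInstance

end UpwardClosed

namespace FunctorToFintypeCat

variable {C : Type*} [Category C]

def support (X : Subobject (⊤_ (C ⥤ FintypeCat.{u}))) : {S : Set C // UpwardClosed S} :=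
  ⟨{j | Nonempty ((X : C ⥤ FintypeCat.{u}).obj j)},
    fun g ⟨x⟩ => ⟨(X : C ⥤ FintypeCat.{u}).map g x⟩⟩

lemma support_le_support_iff {X Y : Subobject (⊤_ (C ⥤ FintypeCat.{u}))} :
    support X ≤ support Y ↔ X ≤ Y :=
  ⟨fun h => Subobject.le_of_comm
      (homOfNonempty (subsingleton_obj_of_mono_terminal Y.arrow) fun j => @h j)
      (terminal.hom_ext _ _),
    fun h _ ⟨x⟩ => ⟨(Subobject.ofLE X Y h).app _ x⟩⟩

lemma support_mk_terminal_from_functor {S : Set C} (hS : UpwardClosed S) :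
    support (Subobject.mk (terminal.from hS.functor.{u})) = ⟨S, hS⟩ := by
  ext j
  exact (FintypeCat.equivEquivIso.symm ((Subobject.underlyingIso _).app j)).nonempty_congr.trans
    (hS.nonempty_functor_obj_iff j)

lemma support_surjective :
    Function.Surjective (support : Subobject (⊤_ (C ⥤ FintypeCat.{u})) → _) :=
  fun S => ⟨_, support_mk_terminal_from_functor S.2⟩

noncomputable def subobjectTerminalOrderIso :
    Subobject (⊤_ (C ⥤ FintypeCat.{u})) ≃o {S : Set C // UpwardClosed S} :=
  OrderIso.ofSurjective (OrderEmbedding.ofMapLEIff support fun _ _ => support_le_support_iff)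
    support_surjective

end FunctorToFintypeCat

theorem stmt_2_general (J : Type u) [SmallCategory J] :
    Nonempty (Subobject (⊤_ (J ⥤ FintypeCat.{u})) ≃o {S : Set J // UpwardClosed S}) :=
  ⟨FunctorToFintypeCat.subobjectTerminalOrderIso⟩

theorem stmt_2 (J : Type u) [SmallCategory J] [FinCategory J] :
    Nonempty (Subobject (⊤_ (J ⥤ FintypeCat.{u})) ≃o {S : Set J // UpwardClosed S}) :=
  stmt_2_general J
end

section
/- Let J be a finite category and X : J ⥤ FintypeCat. The lattice of subobjects of X in the functor category J ⥤ FintypeCat is order-isomorphic to the lattice (ordered by inclusion) of upward closed sets of objects of the category of elements of X. -/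
/-!
Whiskering with the inclusion `FintypeCat ⥤ Type` is fully faithful and preserves monomorphisms,
so it embeds the subobjects of `X` into those of `X ⋙ incl`, i.e. into its subfunctors. The
embedding is onto because a subfunctor of a finite-valued functor is again finite-valued and so
lifts back to `FintypeCat`. Finally, a subfunctor is the same thing as an upward closed set of
elements: `a ∈ G.obj j` exactly when `⟨j, a⟩` lies in the set.
-/

open CategoryTheory CategoryTheory.Limits

universe u

namespace CategoryTheory

namespace Functor

variable {C D : Type*} [Category C] [Category D] (F : C ⥤ D) [F.Full] [F.Faithful]
  [F.PreservesMonomorphisms]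

lemma mk_map_arrow_le_mk_map_arrow_iff {X : C} {P Q : Subobject X} :
    Subobject.mk (F.map P.arrow) ≤ Subobject.mk (F.map Q.arrow) ↔ P ≤ Q := by
  constructor
  · intro h
    exact Subobject.le_of_comm (F.preimage (Subobject.ofMkLEMk _ _ h)) (F.map_injective (by simp))
  · intro h
    exact Subobject.mk_le_mk_of_comm (F.map (Subobject.ofLE P Q h))
      (by rw [← F.map_comp, Subobject.ofLE_arrow])

noncomputable def subobjectOrderEmbedding (X : C) : Subobject X ↪o Subobject (F.obj X) :=
  OrderEmbedding.ofMapLEIff (fun P => Subobject.mk (F.map P.arrow))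
    fun _ _ => F.mk_map_arrow_le_mk_map_arrow_iff

lemma subobjectOrderEmbedding_mk {A X : C} (f : A ⟶ X) [Mono f] :
    F.subobjectOrderEmbedding X (Subobject.mk f) = Subobject.mk (F.map f) :=
  Subobject.mk_eq_mk_of_comm _ _ (F.mapIso (Subobject.underlyingIso f))
    (by rw [mapIso_hom, ← F.map_comp, Subobject.underlyingIso_hom_comp_eq_mk])

end Functor

end CategoryTheory

namespace FintypeCat

variable {J : Type*} [Category J] (X : J ⥤ FintypeCat.{u})

lemma subobjectOrderEmbedding_whiskeringRight_incl_surjective :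
    Function.Surjective <|
      ((Functor.whiskeringRight J FintypeCat.{u} (Type u)).obj incl).subobjectOrderEmbedding X := by
  intro S
  let W := (Functor.whiskeringRight J FintypeCat.{u} (Type u)).obj incl
  let G := Subfunctor.range S.arrow
  let L : J ⥤ FintypeCat.{u} :=
    ObjectProperty.lift _ G.toFunctor fun j => @Subtype.finite _ (X.obj j).property _
  let m : L ⟶ X := W.preimage G.ι
  have hm : W.map m = G.ι := W.map_preimage _
  have : Mono m := W.mono_of_mono_map (by rw [hm]; infer_instance)
  refine ⟨Subobject.mk m, ?_⟩
  rw [Functor.subobjectOrderEmbedding_mk]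
  exact (Subobject.mk_eq_mk_of_comm _ _ (Iso.refl _) (by rw [hm]; rfl)).trans
    (Subfunctor.subobjectMk_range_arrow S)

noncomputable def subobjectOrderIsoSubfunctor : Subobject X ≃o Subfunctor (X ⋙ incl) :=
  (OrderIso.ofSurjective _ (subobjectOrderEmbedding_whiskeringRight_incl_surjective X)).trans
    (Subfunctor.orderIsoSubobject _).symm

end FintypeCat

namespace CategoryTheory.Subfunctor

variable {C : Type*} [Category C] (F : C ⥤ Type*)

def orderIsoUpwardClosed : Subfunctor F ≃o {S : Set F.Elements // UpwardClosed S} where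
  toFun G :=
    ⟨{p | p.2 ∈ G.obj p.1}, fun {_ y} f hp => show y.2 ∈ G.obj y.1 from f.2 ▸ G.map f.1 hp⟩
  invFun S :=
    { obj j := {a | ⟨j, a⟩ ∈ S.1}
      map f a ha := S.2 (x := ⟨_, a⟩) (y := ⟨_, F.map f a⟩) ⟨f, rfl⟩ ha }
  left_inv _ := rfl
  right_inv _ := rfl
  map_rel_iff' := ⟨fun h j a ha => @h ⟨j, a⟩ ha, fun h p hp => h p.1 hp⟩

end CategoryTheory.Subfunctor

theorem stmt_3_general (J : Type u) [SmallCategory J] (X : J ⥤ FintypeCat.{u}) :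
    Nonempty (Subobject X ≃o {S : Set (X ⋙ FintypeCat.incl).Elements // UpwardClosed S}) :=
  ⟨(FintypeCat.subobjectOrderIsoSubfunctor X).trans (Subfunctor.orderIsoUpwardClosed _)⟩

theorem stmt_3 (J : Type u) [SmallCategory J] [FinCategory J] (X : J ⥤ FintypeCat.{u}) :
    Nonempty (Subobject X ≃o {S : Set (X ⋙ FintypeCat.incl).Elements // UpwardClosed S}) :=
  stmt_3_general J X
end

section
/- Let P be a finite partial order, regarded as a topological space whose open sets are exactly the upper sets of P (the upper-set / Alexandrov topology). Then the category of sheaves of types on this topological space is equivalent to the functor category P ⥤ Type, where P is regarded as a (thin) category via its order. -/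
open CategoryTheory CategoryTheory.Limits

universe u

/-!
Every open set is the union of the principal upper sets `↑x` it contains, so `x ↦ ↑x` is a
cover-dense full embedding `Xᵒᵖ ⥤ Opens X`, and by the comparison lemma sheaves on `X` are sheaves
on `Xᵒᵖ` for the induced topology. That topology is trivial: a sieve on `↑x` covers only if some
member `↑y ⊇ ↑x` contains `x`, forcing `y ≤ x ≤ y`, so the sieve is maximal. Sheaves for the trivial
topology are just presheaves on `Xᵒᵖ`, i.e. functors out of `X`.
-/

namespace Alexandrov

open TopologicalSpace Opposite

section

variable {X : Type*} [TopologicalSpace X] [Preorder X] [Topology.IsUpperSet X]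

instance : (principals X).leftOp.Full where
  map_surjective {_ _} f :=
    ⟨(homOfLE ((principalOpen_le_iff _).1 f.le)).op, Subsingleton.elim _ _⟩

instance : (principals X).leftOp.Faithful where
  map_injective _ := Subsingleton.elim _ _

instance : (principals X).leftOp.IsCoverDense (Opens.grothendieckTopology X) where
  is_cover U x hx :=
    ⟨principalOpen x, homOfLE ((principalOpen_le_iff U).2 hx),
      ⟨⟨op x, 𝟙 _, homOfLE ((principalOpen_le_iff U).2 hx), rfl⟩⟩, self_mem_principalOpen x⟩

theorem inducedTopology_principals_leftOp_eq_bot :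
    (principals X).leftOp.inducedTopology (Opens.grothendieckTopology X) = ⊥ := by
  ext x S
  rw [GrothendieckTopology.bot_covering, Functor.mem_inducedTopology_iff_of_isCoverDense]
  refine ⟨fun hS => ?_, ?_⟩
  · obtain ⟨_, _, ⟨y, g, h, hg, rfl⟩, hx⟩ := hS x.unop (self_mem_principalOpen _)
    let g' : x ⟶ y := (homOfLE (h.le hx)).op
    rw [← Sieve.id_mem_iff_eq_top, ← Subsingleton.elim (g' ≫ g) (𝟙 x)]
    exact S.downward_closed hg g'
  · rintro rfl
    rw [Sieve.functorPushforward_top]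
    exact GrothendieckTopology.top_mem _ _

end

noncomputable def sheafEquivFunctor (X : Type u) [TopologicalSpace X] [Preorder X]
    [Topology.IsUpperSet X] (A : Type*) [Category.{u} A] [HasLimits A] :
    Sheaf (Opens.grothendieckTopology X) A ≌ (X ⥤ A) :=
  ((principals X).leftOp.sheafInducedTopologyEquivOfIsCoverDense _ A).symm.trans <|
    (inducedTopology_principals_leftOp_eq_bot (X := X) ▸ sheafBotEquivalence A).trans
      (Equivalence.congrLeft (opOpEquivalence X))

end Alexandrov

theorem stmt_7_general (P : Type u) [PartialOrder P] :
    letI : TopologicalSpace P := Topology.upperSet P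
    Nonempty (TopCat.Sheaf (Type u) (TopCat.of P) ≌ (P ⥤ Type u)) :=
  letI : TopologicalSpace P := Topology.upperSet P
  ⟨Alexandrov.sheafEquivFunctor P (Type u)⟩

theorem stmt_7 (P : Type u) [Fintype P] [PartialOrder P] :
    letI : TopologicalSpace P := Topology.upperSet P
    Nonempty (TopCat.Sheaf (Type u) (TopCat.of P) ≌ (P ⥤ Type u)) :=
  stmt_7_general P
end

section
/- Let I and J be finite idempotent-complete categories and A : I ⥤ J a functor. The precomposition functor (whiskeringLeft).obj A : (J ⥤ Type) ⥤ (I ⥤ Type) is faithful if and only if every object a of J is a retract of A.obj x for some object x of I. -/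
open CategoryTheory

universe u

/-!
If every object is a retract of some `A.obj x`, naturality along the section and the retraction
recovers each component of a natural transformation from its components on the image of `A`.

Conversely, consider the copresheaf `b ↦ {predicates on arrows out of b}`, acted on by
precomposition. By Yoneda, the predicate "factors through some `A.obj x`" and the always-true
predicate on arrows out of `a` give two transformations out of `coyoneda a`. They agree after
restriction along `A`, because every arrow `A.obj x ⟶ c` trivially factors through `A.obj x`.
Faithfulness makes them equal, so `𝟙 a` factors through some `A.obj x`, i.e. `a` is a retract
of it.
-/

namespace CategoryTheory

lemma NatTrans.app_eq_app_of_retract {C D : Type*} [Category C] [Category D] {F G : C ⥤ D}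
    {α β : F ⟶ G} {a b : C} (ρ : _root_.Retract a b) (h : α.app b = β.app b) :
    α.app a = β.app a := by
  have conj (γ : F ⟶ G) : γ.app a = F.map ρ.i ≫ γ.app b ≫ G.map ρ.r := by
    rw [← γ.naturality, ← F.map_comp_assoc, ρ.retract, F.map_id, Category.id_comp]
  rw [conj α, conj β, h]

lemma Functor.faithful_whiskeringLeft_obj_of_retract {C D E : Type*} [Category C] [Category D]
    [Category E] (A : C ⥤ D) (h : ∀ a : D, ∃ x : C, Nonempty (_root_.Retract a (A.obj x))) :
    ((Functor.whiskeringLeft C D E).obj A).Faithful where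
  map_injective {_ _ α β} hαβ := by
    ext a
    obtain ⟨x, ⟨ρ⟩⟩ := h a
    exact NatTrans.app_eq_app_of_retract ρ (congr_arg (fun γ => γ.app x) hαβ)

def arrowPredicates (J : Type u) [SmallCategory J] : J ⥤ Type u where
  obj b := ∀ ⦃c : J⦄, (b ⟶ c) → Prop
  map g := TypeCat.ofHom fun P _ h => P (g ≫ h)
  map_id _ := by ext; simp
  map_comp _ _ := by ext; simp

lemma Functor.exists_retract_of_faithful_whiskeringLeft_obj {I J : Type u} [SmallCategory I]
    [SmallCategory J] (A : I ⥤ J) [((Functor.whiskeringLeft I J (Type u)).obj A).Faithful]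
    (a : J) : ∃ x : I, Nonempty (_root_.Retract a (A.obj x)) := by
  let factorsThroughA : (arrowPredicates J).obj a :=
    fun _ f => ∃ (x : I) (i : a ⟶ A.obj x) (r : A.obj x ⟶ _), i ≫ r = f
  let alwaysTrue : (arrowPredicates J).obj a := fun _ _ => True
  have restricted_eq : A.whiskerLeft (coyonedaEquiv.symm factorsThroughA) =
      A.whiskerLeft (coyonedaEquiv.symm alwaysTrue) := by
    ext x f
    funext c h
    exact propext ⟨fun _ => trivial, fun _ => ⟨x, f, h, rfl⟩⟩
  have eq : factorsThroughA = alwaysTrue :=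
    coyonedaEquiv.symm.injective ((Functor.whiskeringLeft I J (Type u)).obj A |>.map_injective
      restricted_eq)
  obtain ⟨x, i, r, hir⟩ : factorsThroughA (𝟙 a) := by rw [eq]; trivial
  exact ⟨x, ⟨i, r, hir⟩⟩

end CategoryTheory

theorem stmt_8_general (I J : Type u) [SmallCategory I] [SmallCategory J] (A : I ⥤ J) :
    ((Functor.whiskeringLeft I J (Type u)).obj A).Faithful ↔
      ∀ a : J, ∃ x : I, Nonempty (_root_.Retract a (A.obj x)) :=
  ⟨fun _ => A.exists_retract_of_faithful_whiskeringLeft_obj,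
    A.faithful_whiskeringLeft_obj_of_retract⟩

theorem stmt_8 (I J : Type u) [SmallCategory I] [FinCategory I] [IsIdempotentComplete I]
    [SmallCategory J] [FinCategory J] [IsIdempotentComplete J] (A : I ⥤ J) :
    ((Functor.whiskeringLeft I J (Type u)).obj A).Faithful ↔
      ∀ a : J, ∃ x : I, Nonempty (_root_.Retract a (A.obj x)) :=
  stmt_8_general I J A
end

section
/- Let I be a finite idempotent-complete category, J a finite category, and A : I ⥤ J a full functor. Then the essential image of A is closed under retracts: for any x : I and any a : J, if a is a retract of A.obj x, then there exists y : I with A.obj y ≅ a. -/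
open CategoryTheory

universe u

/-!
A retract `a` of `A.obj x` is the image of the idempotent `r ≫ i` of `A.obj x`. By fullness this
idempotent lifts to some `f : End x`, and since `End x` is a finite monoid some power `f ^ n` is
idempotent while still mapping to `(r ≫ i) ^ n = r ≫ i`. Splitting `f ^ n` in `I` through `y`, the
functor carries this splitting to a second splitting of `r ≫ i`, and two splittings of one
idempotent have isomorphic images.
-/

theorem exists_isIdempotentElem_pow {M : Type*} [Monoid M] [Finite M] (f : M) :
    ∃ n, 0 < n ∧ IsIdempotentElem (f ^ n) := by
  -- The positive powers of `f` form a finite, hence compact, subsemigroup for the discrete topology.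
  let : TopologicalSpace M := ⊥
  have : DiscreteTopology M := ⟨rfl⟩
  obtain ⟨_, ⟨n, rfl⟩, hidem⟩ := exists_idempotent_in_compact_subsemigroup
    (fun _ => continuous_of_discreteTopology) (Set.range fun n : ℕ => f ^ (n + 1))
    (Set.range_nonempty _) (Set.toFinite _).isCompact
    (by rintro _ ⟨m, rfl⟩ _ ⟨k, rfl⟩; exact ⟨m + k + 1, by rw [← pow_add]; ring_nf⟩)
  exact ⟨n + 1, n.succ_pos, hidem⟩

theorem CategoryTheory.Functor.exists_isIdempotentElem_mapEnd_eq {C D : Type*} [Category C]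
    [Category D] (F : C ⥤ D) [F.Full] {X : C} [Finite (End X)] {e : End (F.obj X)}
    (he : IsIdempotentElem e) : ∃ e' : End X, IsIdempotentElem e' ∧ F.mapEnd X e' = e := by
  obtain ⟨f, rfl⟩ : ∃ f : End X, F.mapEnd X f = e := F.map_surjective e
  obtain ⟨n, hn, hidem⟩ := exists_isIdempotentElem_pow f
  exact ⟨f ^ n, hidem, by rw [map_pow]; exact he.pow_eq hn.ne'⟩

namespace Retract

variable {C : Type*} [Category C]

def map {D : Type*} [Category D] {a b : C} (h : _root_.Retract a b) (F : C ⥤ D) :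
    _root_.Retract (F.obj a) (F.obj b) :=
  ⟨F.map h.i, F.map h.r, by rw [← F.map_comp, h.retract, F.map_id]⟩

theorem idempotent_r_comp_i {a b : C} (h : _root_.Retract a b) :
    (h.r ≫ h.i) ≫ h.r ≫ h.i = h.r ≫ h.i := by
  rw [Category.assoc, reassoc_of% h.retract]

def isoOfIdempotentEq {a a' b : C} (h : _root_.Retract a b) (h' : _root_.Retract a' b)
    (he : h.r ≫ h.i = h'.r ≫ h'.i) : a ≅ a' where
  hom := h.i ≫ h'.r
  inv := h'.i ≫ h.r
  hom_inv_id := by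
    rw [Category.assoc, reassoc_of% he.symm, reassoc_of% h.retract, h.retract]
  inv_hom_id := by
    rw [Category.assoc, reassoc_of% he, reassoc_of% h'.retract, h'.retract]

end Retract

theorem stmt_9_general (I J : Type u) [SmallCategory I] [FinCategory I] [IsIdempotentComplete I]
    [SmallCategory J] (A : I ⥤ J) [A.Full]
    (x : I) (a : J) (h : Nonempty (_root_.Retract a (A.obj x))) :
    ∃ y : I, Nonempty (A.obj y ≅ a) := by
  obtain ⟨h⟩ := h
  have : Finite (End x) := inferInstanceAs (Finite (x ⟶ x))
  obtain ⟨e, he, hAe⟩ :=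
    A.exists_isIdempotentElem_mapEnd_eq (e := h.r ≫ h.i) h.idempotent_r_comp_i
  obtain ⟨y, s, p, hsp, hps⟩ := IsIdempotentComplete.idempotents_split x e he
  let hy : _root_.Retract y x := ⟨s, p, hsp⟩
  have hsplit : (hy.map A).r ≫ (hy.map A).i = h.r ≫ h.i := by
    simp only [hy, Retract.map, ← A.map_comp, hps, ← hAe, Functor.mapEnd_apply]
  exact ⟨y, ⟨(hy.map A).isoOfIdempotentEq h hsplit⟩⟩

theorem stmt_9 (I J : Type u) [SmallCategory I] [FinCategory I] [IsIdempotentComplete I]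
    [SmallCategory J] [FinCategory J] (A : I ⥤ J) [A.Full]
    (x : I) (a : J) (h : Nonempty (_root_.Retract a (A.obj x))) :
    ∃ y : I, Nonempty (A.obj y ≅ a) :=
  stmt_9_general I J A x a h
end

section
/- Let I and J be finite idempotent-complete categories and A : I ⥤ J a functor. Then the following are equivalent: (1) A is open and every object a of J is a retract of A.obj x for some x : I (A is an open surjection); (2) A is essentially surjective and for every x : I, every a : J and every f : A.obj x ⟶ a there exist y : I, u : x ⟶ y and an isomorphism e : A.obj y ≅ a with A.map u ≫ e.hom = f (A is stably surjective and upwards stably surjective). -/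
open CategoryTheory

universe u

/-- A functor `A : I ⥤ J` is open if for every `x : I`, every `a : J` and every
`f : A.obj x ⟶ a`, there exist `y : I`, `u : x ⟶ y` and morphisms `s : a ⟶ A.obj y`,
`r : A.obj y ⟶ a` such that `s ≫ r = 𝟙 a` and `f ≫ s = A.map u`. -/
def IsOpenFunctor {I J : Type*} [Category I] [Category J] (A : I ⥤ J) : Prop :=
  ∀ (x : I) (a : J) (f : A.obj x ⟶ a),
    ∃ (y : I) (u : x ⟶ y) (s : a ⟶ A.obj y) (r : A.obj y ⟶ a),
      s ≫ r = 𝟙 a ∧ f ≫ s = A.map u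

/-!
Given `f : A x ⟶ a`, openness produces retractions `r : A y ⟶ a` through which `f` factors
along `A`, and applying openness to such an `r` produces a next one, linked to it by a morphism
`u` of `I` with `A u = r ≫ s'`. Finiteness makes this chain return to itself, giving
`w : y ⟶ y` with `A w = r ≫ s`. Since `r ≫ s` is idempotent, the finite semigroup of all such
`w` contains an idempotent; splitting it in `I` gives an object `z` with `A z ≅ a`, because two
splittings of the same idempotent are isomorphic.
-/

lemma Set.Finite.exists_isIdempotentElem {M : Type*} [Semigroup M] {s : Set M} (hs : s.Finite)
    (hne : s.Nonempty) (hmul : ∀ x ∈ s, ∀ y ∈ s, x * y ∈ s) : ∃ m ∈ s, IsIdempotentElem m := by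
  let : TopologicalSpace M := ⊥
  have : DiscreteTopology M := ⟨rfl⟩
  exact exists_idempotent_in_compact_subsemigroup (fun _ => continuous_of_discreteTopology) s hne
    hs.isCompact hmul

lemma Finite.exists_rel_self {α : Type*} [Finite α] [Nonempty α] (r : α → α → Prop)
    [IsTrans α r] (h : ∀ a, ∃ b, r a b) : ∃ a, r a a := by
  by_contra! hirr
  have : Std.Irrefl r := ⟨hirr⟩
  obtain ⟨a, -, ha⟩ :=
    (Finite.wellFounded_of_trans_of_irrefl (Function.swap r)).has_min Set.univ Set.univ_nonempty
  obtain ⟨b, hab⟩ := h a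
  exact ha b trivial hab

namespace CategoryTheory

@[simps]
def isoOfSplittings {C : Type*} [Category C] {y z a : C} {i : z ⟶ y} {q : y ⟶ z}
    {s : a ⟶ y} {r : y ⟶ a} (hiq : i ≫ q = 𝟙 z) (hsr : s ≫ r = 𝟙 a) (h : q ≫ i = r ≫ s) :
    z ≅ a where
  hom := i ≫ r
  inv := s ≫ q
  hom_inv_id := by
    rw [Category.assoc, ← Category.assoc r, ← h, Category.assoc, reassoc_of% hiq, hiq]
  inv_hom_id := by
    rw [Category.assoc, ← Category.assoc q, h, Category.assoc, reassoc_of% hsr, hsr]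

lemma exists_iso_of_map_eq_retraction {I J : Type*} [Category I] [Category J]
    [IsIdempotentComplete I] (A : I ⥤ J) {y : I} [Finite (y ⟶ y)] {a : J} {s : a ⟶ A.obj y}
    {r : A.obj y ⟶ a} (hsr : s ≫ r = 𝟙 a) {w : y ⟶ y} (hw : A.map w = r ≫ s) :
    ∃ (z : I) (q : y ⟶ z) (e : A.obj z ≅ a), A.map q ≫ e.hom = r := by
  have : Finite (End y) := ‹Finite (y ⟶ y)›
  obtain ⟨e, he, hidem⟩ := (Set.toFinite {e : End y | A.map e = r ≫ s}).exists_isIdempotentElem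
    ⟨w, hw⟩ fun e he e' he' => by
      change A.map e = _ at he
      change A.map e' = _ at he'
      change A.map (e' ≫ e) = _
      rw [A.map_comp, he, he', Category.assoc, reassoc_of% hsr]
  obtain ⟨z, i, q, hiq, hqi⟩ := IsIdempotentComplete.idempotents_split y e hidem
  have hAiq : A.map i ≫ A.map q = 𝟙 _ := by rw [← A.map_comp, hiq, A.map_id]
  have hAqi : A.map q ≫ A.map i = r ≫ s := by rw [← A.map_comp, hqi]; exact he
  refine ⟨z, q, isoOfSplittings hAiq hsr hAqi, ?_⟩
  rw [isoOfSplittings_hom, reassoc_of% hAqi, hsr, Category.comp_id]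

end CategoryTheory

structure RetractFactorization {I J : Type*} [Category I] [Category J] (A : I ⥤ J) {x : I}
    {a : J} (f : A.obj x ⟶ a) where
  y : I
  s : a ⟶ A.obj y
  r : A.obj y ⟶ a
  s_r : s ≫ r = 𝟙 a
  exists_factor : ∃ v : x ⟶ y, A.map v ≫ r = f

namespace RetractFactorization

variable {I J : Type*} [Category I] [Category J] {A : I ⥤ J} {x : I} {a : J} {f : A.obj x ⟶ a}

instance [Finite I] [∀ y, Finite (a ⟶ A.obj y)] [∀ y, Finite (A.obj y ⟶ a)] :
    Finite (RetractFactorization A f) := by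
  refine Finite.of_injective
    (fun d => (⟨d.y, d.s, d.r⟩ : Σ y : I, (a ⟶ A.obj y) × (A.obj y ⟶ a))) ?_
  rintro ⟨y, s, r, _, _⟩ ⟨y', s', r', _, _⟩ h
  obtain ⟨rfl, h⟩ := Sigma.mk.inj_iff.mp h
  obtain ⟨rfl, rfl⟩ := Prod.mk.inj (eq_of_heq h)
  rfl

def Step (d d' : RetractFactorization A f) : Prop :=
  ∃ u : d.y ⟶ d'.y, A.map u = d.r ≫ d'.s

instance : IsTrans (RetractFactorization A f) Step where
  trans := by
    rintro d d' d'' ⟨u, hu⟩ ⟨u', hu'⟩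
    refine ⟨u ≫ u', ?_⟩
    rw [A.map_comp, hu, hu', Category.assoc, reassoc_of% d'.s_r]

end RetractFactorization

namespace IsOpenFunctor

section

variable {I J : Type*} [Category I] [Category J] {A : I ⥤ J}

lemma nonempty_retractFactorization (hA : IsOpenFunctor A) {x : I} {a : J} (f : A.obj x ⟶ a) :
    Nonempty (RetractFactorization A f) := by
  obtain ⟨y, u, s, r, hsr, hfs⟩ := hA x a f
  exact ⟨⟨y, s, r, hsr, u, by rw [← hfs, Category.assoc, hsr, Category.comp_id]⟩⟩

lemma exists_step (hA : IsOpenFunctor A) {x : I} {a : J} {f : A.obj x ⟶ a}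
    (d : RetractFactorization A f) : ∃ d', d.Step d' := by
  obtain ⟨y, u, s, r, hsr, hrs⟩ := hA d.y a d.r
  obtain ⟨v, hv⟩ := d.exists_factor
  refine ⟨⟨y, s, r, hsr, v ≫ u, ?_⟩, u, hrs.symm⟩
  rw [A.map_comp, Category.assoc, ← hrs, Category.assoc, hsr, Category.comp_id, hv]

end

theorem exists_map_comp_iso_hom_eq {I J : Type*} [SmallCategory I] [FinCategory I]
    [IsIdempotentComplete I] [SmallCategory J] [FinCategory J] {A : I ⥤ J}
    (hA : IsOpenFunctor A) {x : I} {a : J} (f : A.obj x ⟶ a) :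
    ∃ (y : I) (u : x ⟶ y) (e : A.obj y ≅ a), A.map u ≫ e.hom = f := by
  have := hA.nonempty_retractFactorization f
  obtain ⟨d, w, hw⟩ := Finite.exists_rel_self (RetractFactorization.Step (f := f)) hA.exists_step
  obtain ⟨v, hv⟩ := d.exists_factor
  obtain ⟨z, q, e, hqe⟩ := exists_iso_of_map_eq_retraction A d.s_r hw
  exact ⟨z, v ≫ q, e, by rw [A.map_comp, Category.assoc, hqe, hv]⟩

end IsOpenFunctor

theorem stmt_12_general (I J : Type u) [SmallCategory I] [FinCategory I] [IsIdempotentComplete I]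
    [SmallCategory J] [FinCategory J] (A : I ⥤ J) :
    (IsOpenFunctor A ∧ ∀ a : J, ∃ x : I, Nonempty (_root_.Retract a (A.obj x))) ↔
      (A.EssSurj ∧ ∀ (x : I) (a : J) (f : A.obj x ⟶ a),
        ∃ (y : I) (u : x ⟶ y) (e : A.obj y ≅ a), A.map u ≫ e.hom = f) := by
  constructor
  · rintro ⟨hA, hretract⟩
    refine ⟨⟨fun a => ?_⟩, fun x a f => hA.exists_map_comp_iso_hom_eq f⟩
    obtain ⟨x, ⟨ret⟩⟩ := hretract a
    obtain ⟨y, -, e, -⟩ := hA.exists_map_comp_iso_hom_eq ret.r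
    exact ⟨y, ⟨e⟩⟩
  · rintro ⟨hess, hstable⟩
    refine ⟨fun x a f => ?_, fun a => ?_⟩
    · obtain ⟨y, u, e, he⟩ := hstable x a f
      exact ⟨y, u, e.inv, e.hom, e.inv_hom_id, by rw [← he, Category.assoc, e.hom_inv_id,
        Category.comp_id]⟩
    · obtain ⟨x, ⟨e⟩⟩ := hess.mem_essImage a
      exact ⟨x, ⟨⟨e.inv, e.hom, e.inv_hom_id⟩⟩⟩

theorem stmt_12 (I J : Type u) [SmallCategory I] [FinCategory I] [IsIdempotentComplete I]
    [SmallCategory J] [FinCategory J] [IsIdempotentComplete J] (A : I ⥤ J) :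
    (IsOpenFunctor A ∧ ∀ a : J, ∃ x : I, Nonempty (_root_.Retract a (A.obj x))) ↔
      (A.EssSurj ∧ ∀ (x : I) (a : J) (f : A.obj x ⟶ a),
        ∃ (y : I) (u : x ⟶ y) (e : A.obj y ≅ a), A.map u ≫ e.hom = f) :=
  stmt_12_general I J A
end

section
/- Let Q and P be finite idempotent-complete categories, suppose P has an initial object, and let A : Q ⥤ P be an open functor. Then every object of P is a retract of A.obj q for some q : Q (i.e. A is a surjection) if and only if the initial object of P lies in the essential image of A, i.e. there exists q : Q with A.obj q ≅ ⊥ (the initial object of P). -/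
/-!
A retraction `A q₀ ⟶ ⊥` and openness give an infinite path in `Q` along morphisms whose images
factor through `⊥`. These morphisms form an ideal, and by finiteness the path closes a cycle,
i.e. the ideal contains an endomorphism. An idempotent in the finite semigroup it generates
splits off an object whose identity lies in the ideal, and such an object is sent to an object
isomorphic to `⊥`.
-/

open CategoryTheory CategoryTheory.Limits

universe u

namespace CategoryTheory.MorphismProperty

variable {C D : Type*} [Category C] [Category D]

structure IsIdeal (I : MorphismProperty C) : Prop where
  comp_mem_left : ∀ {X Y Z : C} (f : X ⟶ Y) (g : Y ⟶ Z), I g → I (f ≫ g)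
  comp_mem_right : ∀ {X Y Z : C} (f : X ⟶ Y) (g : Y ⟶ Z), I f → I (f ≫ g)

lemma IsIdeal.inverseImage {I : MorphismProperty D} (hI : I.IsIdeal) (F : C ⥤ D) :
    (I.inverseImage F).IsIdeal where
  comp_mem_left f g hg := by
    simpa only [inverseImage_iff, F.map_comp] using hI.comp_mem_left (F.map f) (F.map g) hg
  comp_mem_right f g hf := by
    simpa only [inverseImage_iff, F.map_comp] using hI.comp_mem_right (F.map f) (F.map g) hf

lemma IsIdeal.exists_endo_mem [Finite C] {I : MorphismProperty C} (hI : I.IsIdeal)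
    {S : Set C} (hS : S.Nonempty) (hstep : ∀ x ∈ S, ∃ y ∈ S, ∃ u : x ⟶ y, I u) :
    ∃ (X : C) (v : X ⟶ X), I v := by
  by_contra! hirrefl
  -- reversed, so that a minimal element of `S` has no morphism of `I` into `S`
  let R : C → C → Prop := fun y x => ∃ u : x ⟶ y, I u
  have : IsTrans C R := ⟨fun _ _ _ ⟨u, hu⟩ ⟨w, _⟩ => ⟨w ≫ u, hI.comp_mem_left w u hu⟩⟩
  have : Std.Irrefl R := ⟨fun x ⟨v, hv⟩ => hirrefl x v hv⟩
  obtain ⟨x, hx, hmax⟩ := (Finite.wellFounded_of_trans_of_irrefl R).has_min S hS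
  obtain ⟨y, hy, u, hu⟩ := hstep x hx
  exact hmax y hy ⟨u, hu⟩

lemma IsIdeal.exists_id_mem [IsIdempotentComplete C] {I : MorphismProperty C} (hI : I.IsIdeal)
    {X : C} [Finite (X ⟶ X)] {v : X ⟶ X} (hv : I v) : ∃ Y : C, I (𝟙 Y) := by
  let : TopologicalSpace (End X) := ⊥
  have : DiscreteTopology (End X) := ⟨rfl⟩
  have : Finite (End X) := ‹Finite (X ⟶ X)›
  -- multiplication in `End X` is `x * y = y ≫ x`
  obtain ⟨p, hp, hpp⟩ := exists_idempotent_in_compact_subsemigroup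
    (fun _ => continuous_of_discreteTopology) {w : End X | I w} ⟨v, hv⟩
    (Set.toFinite _).isCompact (fun x hx y _ => hI.comp_mem_left y x hx)
  obtain ⟨Y, i, e, hie, hei⟩ := IsIdempotentComplete.idempotents_split X p hpp
  refine ⟨Y, ?_⟩
  have hid : 𝟙 Y = i ≫ p ≫ e := by rw [← hei, Category.assoc, reassoc_of% hie, hie]
  rw [hid]
  exact hI.comp_mem_left _ _ (hI.comp_mem_right _ _ hp)

variable (C) [HasInitial C]

def factorsThroughInitial : MorphismProperty C :=
  fun _ Y f => ∃ r, f = r ≫ initial.to Y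

variable {C}

lemma isIdeal_factorsThroughInitial : (factorsThroughInitial C).IsIdeal where
  comp_mem_left f _ := fun ⟨r, hr⟩ => ⟨f ≫ r, by simp [hr]⟩
  comp_mem_right _ g := fun ⟨r, hr⟩ =>
    ⟨r, by rw [hr, Category.assoc]; congr 1; exact initial.hom_ext _ _⟩

lemma factorsThroughInitial.nonempty_iso_initial {X : C} (h : factorsThroughInitial C (𝟙 X)) :
    Nonempty (X ≅ ⊥_ C) :=
  let ⟨r, hr⟩ := h
  ⟨{ hom := r, inv := initial.to X, hom_inv_id := hr.symm, inv_hom_id := initial.hom_ext _ _ }⟩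

end CategoryTheory.MorphismProperty

namespace IsOpenFunctor

open MorphismProperty

variable {Q P : Type*} [Category Q] [Category P] [HasInitial P] {A : Q ⥤ P}

lemma exists_hom_factorsThroughInitial (hA : IsOpenFunctor A) {x : Q} (r : A.obj x ⟶ ⊥_ P) :
    ∃ y : Q, Nonempty (A.obj y ⟶ ⊥_ P) ∧ ∃ u : x ⟶ y, factorsThroughInitial P (A.map u) := by
  obtain ⟨y, u, s, r', -, hu⟩ := hA x (⊥_ P) r
  exact ⟨y, ⟨r'⟩, u, r, by rw [← hu, initial.hom_ext s (initial.to _)]⟩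

lemma exists_retract_of_iso_initial (hA : IsOpenFunctor A) {q : Q} (e : A.obj q ≅ ⊥_ P)
    (a : P) : ∃ y : Q, Nonempty (_root_.Retract a (A.obj y)) :=
  let ⟨y, _, s, r, hsr, _⟩ := hA q a (e.hom ≫ initial.to a)
  ⟨y, ⟨⟨s, r, hsr⟩⟩⟩

end IsOpenFunctor

theorem stmt_13_general (Q P : Type u) [SmallCategory Q] [FinCategory Q] [IsIdempotentComplete Q]
    [SmallCategory P] [HasInitial P]
    (A : Q ⥤ P) (hA : IsOpenFunctor A) :
    (∀ a : P, ∃ q : Q, Nonempty (_root_.Retract a (A.obj q))) ↔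
      ∃ q : Q, Nonempty (A.obj q ≅ ⊥_ P) := by
  have hI := MorphismProperty.isIdeal_factorsThroughInitial.inverseImage A
  constructor
  · intro hsurj
    obtain ⟨q₀, ⟨R⟩⟩ := hsurj (⊥_ P)
    obtain ⟨X, v, hv⟩ := hI.exists_endo_mem (S := {x | Nonempty (A.obj x ⟶ ⊥_ P)}) ⟨q₀, ⟨R.r⟩⟩
      fun x ⟨r⟩ => hA.exists_hom_factorsThroughInitial r
    obtain ⟨Y, hY⟩ := hI.exists_id_mem hv
    refine ⟨Y, MorphismProperty.factorsThroughInitial.nonempty_iso_initial ?_⟩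
    simpa only [MorphismProperty.inverseImage_iff, A.map_id] using hY
  · rintro ⟨q, ⟨e⟩⟩ a
    exact hA.exists_retract_of_iso_initial e a

theorem stmt_13 (Q P : Type u) [SmallCategory Q] [FinCategory Q] [IsIdempotentComplete Q]
    [SmallCategory P] [FinCategory P] [IsIdempotentComplete P] [HasInitial P]
    (A : Q ⥤ P) (hA : IsOpenFunctor A) :
    (∀ a : P, ∃ q : Q, Nonempty (_root_.Retract a (A.obj q))) ↔
      ∃ q : Q, Nonempty (A.obj q ≅ ⊥_ P) :=
  stmt_13_general Q P A hA
end
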